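/- Let Γ be a saturated convex Θ^3-drawing of a graph G on n ≥ 4 vertices and let φ be any crossing-free 3-coloring of its edges. Then for each color c ∈ {1,2,3}, the number of inner edges of color c is at least (n − 4)/2, i.e., 2·|{e ∈ E(G) : φ(e) = c and e is an inner edge}| ≥ n − 4. -/

import Mathlib

/-- Points of the plane. -/
abbrev Pt : Type := ℝ × ℝ

/-- Two straight-line segments cross if some point lies in the interior
(open segment) of both. -/
def SegCross (a b c d : Pt) : Prop :=
  ∃ x : Pt, x ∈ openSegment ℝ a b ∧ x ∈ openSegment ℝ c d

/-- Two edges (unordered pairs of vertices) cross in the drawing `p`. -/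
def EdgeCross {V : Type} (p : V → Pt) (e f : Sym2 V) : Prop :=
  ∃ u v x y : V, e = s(u, v) ∧ f = s(x, y) ∧ SegCross (p u) (p v) (p x) (p y)

/-- The drawing `p` is injective and no three vertex points are collinear. -/
def GenPos {V : Type} (p : V → Pt) : Prop :=
  Function.Injective p ∧
    ∀ u v w : V, u ≠ v → u ≠ w → v ≠ w → ¬ Collinear ℝ ({p u, p v, p w} : Set Pt)

/-- The vertex points are in convex position: every vertex point is an extreme
point of the convex hull of all vertex points. -/
def ConvexPos {V : Type} (p : V → Pt) : Prop :=
  ∀ v : V, p v ∈ Set.extremePoints ℝ (convexHull ℝ (Set.range p))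

/-- A `k`-coloring of the edges of `G` is crossing-free if no two distinct
edges of the same color cross. -/
def CrossingFree {V : Type} {k : ℕ} (G : SimpleGraph V) (p : V → Pt)
    (φ : Sym2 V → Fin k) : Prop :=
  ∀ e ∈ G.edgeSet, ∀ f ∈ G.edgeSet, e ≠ f → φ e = φ f → ¬ EdgeCross p e f

open scoped Classical

/-- A precolored drawing `(G, p, φ)` is saturated: for every pair of distinct
non-adjacent vertices and every color `c`, assigning color `c` to the new edge
`uv` yields a coloring that is not crossing-free. -/
def PrecoloredSaturated {V : Type} {k : ℕ} (G : SimpleGraph V) (p : V → Pt)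
    (φ : Sym2 V → Fin k) : Prop :=
  ∀ u v : V, u ≠ v → ¬ G.Adj u v → ∀ c : Fin k,
    ¬ CrossingFree (G ⊔ SimpleGraph.fromEdgeSet {s(u, v)}) p
      (fun e => if e = s(u, v) then c else φ e)

/-- A (non-precolored) drawing of `G` is saturated for thickness `k`: for every
pair of distinct non-adjacent vertices `u, v`, the drawing of `G + uv` admits
no crossing-free `k`-coloring. -/
def Saturated {V : Type} (k : ℕ) (G : SimpleGraph V) (p : V → Pt) : Prop :=
  ∀ u v : V, u ≠ v → ¬ G.Adj u v →
    ∀ φ : Sym2 V → Fin k,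
      ¬ CrossingFree (G ⊔ SimpleGraph.fromEdgeSet {s(u, v)}) p φ

/-- Twice the signed area of the triangle `a b c`. -/
def det2 (a b c : Pt) : ℝ :=
  (b.1 - a.1) * (c.2 - a.2) - (b.2 - a.2) * (c.1 - a.1)

/-- An edge is an outer edge if its endpoints are consecutive on the boundary
of the convex hull of the vertex points, i.e. all other vertex points lie
strictly on one side of the line through its endpoints. -/
def IsOuterEdge {V : Type} (p : V → Pt) (e : Sym2 V) : Prop :=
  ∃ u v : V, e = s(u, v) ∧
    ((∀ w : V, w ≠ u → w ≠ v → 0 < det2 (p u) (p v) (p w)) ∨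
     (∀ w : V, w ≠ u → w ≠ v → det2 (p u) (p v) (p w) < 0))

/-!
Order the vertices counterclockwise along the convex hull; then two edges cross exactly when
their endpoints interleave. Fix a color `c`. The inner edges of color `c` form a noncrossing
family `S` of chords, which cuts the polygon into faces. By saturation, every chord crossing no
chord of `S` is an edge, and it has color `c` only if it is itself an inner edge of color `c`.
If some face had three vertices not covered by the chords inside it, these and the two corners
of the face would span a convex pentagon whose five diagonals are edges avoiding color `c`;
but the diagonals form a 5-cycle of crossings, which two colors cannot color properly. So every
face has at most two exposed vertices, and an induction over the nested faces of `S` gives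
`n ≤ 2 |S| + 4`.
-/

theorem Finset.exists_lt_lt_of_two_lt_card {α : Type*} [LinearOrder α] {s : Finset α}
    (h : 2 < s.card) : ∃ a ∈ s, ∃ b ∈ s, ∃ c ∈ s, a < b ∧ b < c := by
  obtain ⟨t, hts, ht⟩ := Finset.exists_subset_card_eq (show 3 ≤ s.card from h)
  have hmem := fun i => hts (t.orderEmbOfFin_mem ht i)
  exact ⟨_, hmem 0, _, hmem 1, _, hmem 2, (t.orderEmbOfFin ht).strictMono (by decide),
    (t.orderEmbOfFin ht).strictMono (by decide)⟩

theorem SimpleGraph.exists_lt_of_mem_edgeSet {α : Type*} [LinearOrder α] {G : SimpleGraph α}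
    {e : Sym2 α} (he : e ∈ G.edgeSet) : ∃ i j, i < j ∧ G.Adj i j ∧ e = s(i, j) := by
  induction e using Sym2.ind with
  | _ u v =>
    rcases lt_or_gt_of_ne (G.ne_of_adj he) with h | h
    · exact ⟨u, v, h, he, rfl⟩
    · exact ⟨v, u, h, he.symm, Sym2.eq_swap⟩

theorem Sym2.mk_eq_mk_iff_of_lt {α : Type*} [LinearOrder α] {i j k l : α} (hij : i < j)
    (hkl : k < l) : s(i, j) = s(k, l) ↔ (i, j) = (k, l) := by
  rw [Sym2.eq_iff, Prod.ext_iff]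
  constructor
  · rintro (h | ⟨rfl, rfl⟩)
    · exact h
    · exact absurd (hij.trans hkl) (lt_irrefl _)
  · exact Or.inl

section Det2

theorem det2_rotate (a b c : Pt) : det2 a b c = det2 b c a := by
  simp only [det2]; ring

theorem det2_swap_left (a b c : Pt) : det2 b a c = - det2 a b c := by
  simp only [det2]; ring

theorem det2_swap_right (a b c : Pt) : det2 a c b = - det2 a b c := by
  simp only [det2]; ring

@[simp] theorem det2_self_left (a b : Pt) : det2 a b a = 0 := by
  simp only [det2]; ring

@[simp] theorem det2_self_right (a b : Pt) : det2 a b b = 0 := by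
  simp only [det2]; ring

theorem det2_lineMap (a b c d : Pt) (t : ℝ) :
    det2 a b ((1 - t) • c + t • d) = (1 - t) * det2 a b c + t * det2 a b d := by
  simp only [det2, Prod.fst_add, Prod.snd_add, Prod.smul_fst, Prod.smul_snd, smul_eq_mul]
  ring

theorem collinear_of_det2_eq_zero {a b c : Pt} (h : det2 a b c = 0) :
    Collinear ℝ ({a, b, c} : Set Pt) := by
  rcases eq_or_ne a b with rfl | hab
  · simpa using collinear_pair ℝ a c
  rw [collinear_iff_of_mem (Set.mem_insert a _)]
  have hN : (b.1 - a.1) ^ 2 + (b.2 - a.2) ^ 2 ≠ 0 := by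
    intro h0
    exact hab (Prod.ext (by nlinarith [sq_nonneg (b.1 - a.1), sq_nonneg (b.2 - a.2)])
      (by nlinarith [sq_nonneg (b.1 - a.1), sq_nonneg (b.2 - a.2)]))
  refine ⟨b - a, ?_⟩
  rintro x (rfl | rfl | rfl)
  · exact ⟨0, by simp⟩
  · exact ⟨1, by simp⟩
  · -- orthogonal projection of `x - a` onto `b - a`
    refine ⟨((x.1 - a.1) * (b.1 - a.1) + (x.2 - a.2) * (b.2 - a.2)) /
      ((b.1 - a.1) ^ 2 + (b.2 - a.2) ^ 2), ?_⟩
    simp only [det2] at h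
    refine Prod.ext ?_ ?_ <;>
      simp only [vadd_eq_add, Prod.fst_add, Prod.snd_add, Prod.smul_fst, Prod.smul_snd,
        smul_eq_mul, Prod.fst_sub, Prod.snd_sub] <;> field_simp
    · linear_combination (-(b.2 - a.2)) * h
    · linear_combination (b.1 - a.1) * h

theorem GenPos.det2_ne_zero {V : Type} {p : V → Pt} (hp : GenPos p) {u v w : V}
    (huv : u ≠ v) (huw : u ≠ w) (hvw : v ≠ w) : det2 (p u) (p v) (p w) ≠ 0 :=
  fun h => hp.2 u v w huv huw hvw (collinear_of_det2_eq_zero h)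

end Det2

section Segments

theorem mem_openSegment_iff_lineMap {x a b : Pt} :
    x ∈ openSegment ℝ a b ↔ ∃ t : ℝ, 0 < t ∧ t < 1 ∧ (1 - t) • a + t • b = x := by
  simp [openSegment_eq_image, and_assoc]

theorem det2_eq_zero_of_mem_openSegment {a b x : Pt} (hx : x ∈ openSegment ℝ a b) :
    det2 a b x = 0 := by
  obtain ⟨t, -, -, rfl⟩ := mem_openSegment_iff_lineMap.1 hx
  simp [det2_lineMap]

theorem SegCross.swap_left {a b c d : Pt} (h : SegCross a b c d) : SegCross b a c d := by
  obtain ⟨x, h1, h2⟩ := h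
  exact ⟨x, openSegment_symm ℝ a b ▸ h1, h2⟩

theorem SegCross.swap_right {a b c d : Pt} (h : SegCross a b c d) : SegCross a b d c := by
  obtain ⟨x, h1, h2⟩ := h
  exact ⟨x, h1, openSegment_symm ℝ c d ▸ h2⟩

theorem SegCross.symm {a b c d : Pt} (h : SegCross a b c d) : SegCross c d a b := by
  obtain ⟨x, h1, h2⟩ := h
  exact ⟨x, h2, h1⟩

theorem not_segCross_of_sameSide {a b c d : Pt}
    (h : (0 ≤ det2 a b c ∧ 0 ≤ det2 a b d ∧ (0 < det2 a b c ∨ 0 < det2 a b d)) ∨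
      (det2 a b c ≤ 0 ∧ det2 a b d ≤ 0 ∧ (det2 a b c < 0 ∨ det2 a b d < 0))) :
    ¬ SegCross a b c d := by
  rintro ⟨x, hab, hcd⟩
  obtain ⟨s, hs0, hs1, rfl⟩ := mem_openSegment_iff_lineMap.1 hcd
  have h0 := det2_eq_zero_of_mem_openSegment hab
  rw [det2_lineMap] at h0
  rcases h with ⟨hc, hd, hc' | hd'⟩ | ⟨hc, hd, hc' | hd'⟩ <;> nlinarith

theorem div_sub_mem_Ioo {A B : ℝ} (h : A * B < 0) : 0 < A / (A - B) ∧ A / (A - B) < 1 := by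
  rcases lt_or_gt_of_ne (left_ne_zero_of_mul h.ne) with hA | hA
  · have hB : 0 < B := by nlinarith
    exact ⟨div_pos_of_neg_of_neg hA (by linarith),
      (div_lt_one_of_neg (by linarith)).2 (by linarith)⟩
  · have hB : B < 0 := by nlinarith
    exact ⟨div_pos hA (by linarith), (div_lt_one (by linarith)).2 (by linarith)⟩

theorem segCross_of_mul_neg {a b c d : Pt} (hab : det2 a b c * det2 a b d < 0)
    (hcd : det2 c d a * det2 c d b < 0) : SegCross a b c d := by
  obtain ⟨ht0, ht1⟩ := div_sub_mem_Ioo hcd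
  obtain ⟨hs0, hs1⟩ := div_sub_mem_Ioo hab
  have hAB : det2 c d a - det2 c d b ≠ 0 := by
    intro h; rw [sub_eq_zero.1 h] at hcd; nlinarith [mul_self_nonneg (det2 c d b)]
  have hCD : det2 a b c - det2 a b d ≠ 0 := by
    intro h; rw [sub_eq_zero.1 h] at hab; nlinarith [mul_self_nonneg (det2 a b d)]
  refine ⟨_, mem_openSegment_iff_lineMap.2 ⟨_, ht0, ht1, rfl⟩,
    mem_openSegment_iff_lineMap.2 ⟨_, hs0, hs1, ?_⟩⟩
  simp only [det2] at hAB hCD ⊢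
  refine Prod.ext ?_ ?_ <;>
  · simp only [Prod.fst_add, Prod.snd_add, Prod.smul_fst, Prod.smul_snd, smul_eq_mul]
    field_simp
    ring

end Segments

section ConvexOrder

open Finset

def IsCCWOrder {n : ℕ} (q : Fin n → Pt) : Prop :=
  ∀ i j k, i < j → j < k → 0 < det2 (q i) (q j) (q k)

theorem mem_convexHull_of_det2_nonneg {a b c d : Pt} (ha : 0 ≤ det2 d b c)
    (hb : 0 ≤ det2 a d c) (hc : 0 ≤ det2 a b d) (h : 0 < det2 a b c) :
    d ∈ convexHull ℝ {a, b, c} := by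
  -- barycentric coordinates of `d` with respect to the triangle `abc`
  have hd : d = ∑ i, ![det2 d b c / det2 a b c, det2 a d c / det2 a b c,
      det2 a b d / det2 a b c] i • ![a, b, c] i := by
    simp only [Fin.sum_univ_three, Matrix.cons_val_zero, Matrix.cons_val_one,
      Matrix.cons_val_two, Matrix.head_cons, Matrix.tail_cons]
    simp only [det2] at h ⊢
    refine Prod.ext ?_ ?_ <;>
    · simp only [Prod.fst_add, Prod.snd_add, Prod.smul_fst, Prod.smul_snd, smul_eq_mul]
      field_simp
      ring
  rw [hd]
  refine (convex_convexHull ℝ _).sum_mem (fun i _ => ?_) ?_ (fun i _ => subset_convexHull ℝ _ ?_)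
  · fin_cases i <;> simp only [Fin.zero_eta, Fin.mk_one, Fin.reduceFinMk, Matrix.cons_val] <;>
      positivity
  · simp only [Fin.sum_univ_three, Matrix.cons_val_zero, Matrix.cons_val_one,
      Matrix.cons_val_two, Matrix.head_cons, Matrix.tail_cons]
    field_simp
    simp only [det2]
    ring
  · fin_cases i <;> simp

/-- The points lexicographically above `a` lie in a half-plane bounded by a line through `a`,
so the angular order around `a` is transitive on them. -/
theorem det2_pos_trans_of_toLex_lt {a u v w : Pt} (hu : toLex a < toLex u)
    (hv : toLex a < toLex v) (hw : toLex a < toLex w) (huv : 0 < det2 a u v)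
    (hvw : 0 < det2 a v w) : 0 < det2 a u w := by
  simp only [Prod.Lex.lt_iff, ofLex_toLex] at hu hv hw
  simp only [det2] at huv hvw ⊢
  have key : ((u.1 - a.1) * (w.2 - a.2) - (u.2 - a.2) * (w.1 - a.1)) * (v.1 - a.1) =
      ((u.1 - a.1) * (v.2 - a.2) - (u.2 - a.2) * (v.1 - a.1)) * (w.1 - a.1) +
      ((v.1 - a.1) * (w.2 - a.2) - (v.2 - a.2) * (w.1 - a.1)) * (u.1 - a.1) := by ring
  rcases hv with hv | ⟨hv1, hv2⟩
  · by_contra! huw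
    have huw' := mul_nonpos_of_nonpos_of_nonneg huw (sub_pos.2 hv).le
    rcases hu with hu | ⟨hu1, hu2⟩ <;> rcases hw with hw | ⟨hw1, hw2⟩
    · nlinarith [mul_pos huv (sub_pos.2 hw), mul_pos hvw (sub_pos.2 hu)]
    · rw [← hw1] at key; nlinarith [mul_pos hvw (sub_pos.2 hu)]
    · rw [← hu1] at key; nlinarith [mul_pos huv (sub_pos.2 hw)]
    · rw [← hu1] at huv; nlinarith [mul_pos (sub_pos.2 hu2) (sub_pos.2 hv)]
  · rw [← hv1] at huv hvw
    rcases hw with hw | ⟨hw1, -⟩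
    · nlinarith [mul_pos (sub_pos.2 hv2) (sub_pos.2 hw)]
    · rw [← hw1] at hvw; nlinarith

theorem det2_pos_of_convexPos {V : Type} {p : V → Pt} (hgen : GenPos p) (hconv : ConvexPos p)
    {a u v w : V} (huv : 0 < det2 (p a) (p u) (p v)) (hvw : 0 < det2 (p a) (p v) (p w)) :
    0 < det2 (p u) (p v) (p w) := by
  have hne : ∀ {x y : V}, p x = p y → x = y := fun h => hgen.1 h
  have hu_v : u ≠ v := by rintro rfl; simp at huv
  have hv_w : v ≠ w := by rintro rfl; simp at hvw
  have ha_v : a ≠ v := by rintro rfl; simp at huv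
  have hu_w : u ≠ w := by rintro rfl; rw [det2_swap_right] at hvw; linarith
  refine (hgen.det2_ne_zero hu_v hu_w hv_w).lt_or_gt.resolve_left fun hneg => ?_
  -- otherwise `p v` would lie in the triangle `p a, p u, p w`
  have hmem : p v ∈ convexHull ℝ {p a, p u, p w} := by
    refine mem_convexHull_of_det2_nonneg ?_ hvw.le huv.le ?_
    · rw [det2_swap_left]; linarith
    · have : det2 (p a) (p u) (p w) = det2 (p a) (p u) (p v) + det2 (p a) (p v) (p w) -
          det2 (p u) (p v) (p w) := by simp only [det2]; ring
      linarith
  have hsub : convexHull ℝ {p a, p u, p w} ⊆ convexHull ℝ (Set.range p) :=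
    convexHull_mono (by rintro _ (rfl | rfl | rfl) <;> exact Set.mem_range_self _)
  have hext := extremePoints_convexHull_subset
    (inter_extremePoints_subset_extremePoints_of_subset hsub ⟨hmem, hconv v⟩)
  rcases hext with h | h | h
  · exact ha_v (hne h).symm
  · exact hu_v (hne h).symm
  · exact hv_w (hne h)

theorem exists_perm_rel_of_lt {n : ℕ} (r : Fin n → Fin n → Prop) [IsStrictTotalOrder (Fin n) r] :
    ∃ σ : Equiv.Perm (Fin n), ∀ i j, i < j → r (σ i) (σ j) := by
  classical
  let rank : Fin n → ℕ := fun v => #{u | r u v}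
  have rank_lt : ∀ {u v}, r u v → rank u < rank v := fun {u v} huv =>
    card_lt_card ⟨fun w hw => by simpa using _root_.trans (by simpa using hw) huv,
      fun h => irrefl u (by simpa using h (by simpa using huv))⟩
  refine ⟨Tuple.sort rank, fun i j hij => ?_⟩
  rcases trichotomous_of r (Tuple.sort rank i) (Tuple.sort rank j) with h | h | h
  · exact h
  · exact absurd ((Tuple.sort rank).injective h) hij.ne
  · exact absurd (rank_lt h) (not_lt.2 (Tuple.monotone_sort rank hij.le))

/-- The angular order around `p a`, with `a` first. -/
def AngularLT {V : Type} (p : V → Pt) (a u v : V) : Prop :=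
  (u = a ∧ v ≠ a) ∨ (u ≠ a ∧ 0 < det2 (p a) (p u) (p v))

theorem AngularLT.right_ne {V : Type} {p : V → Pt} {a u v : V} (h : AngularLT p a u v) :
    v ≠ a := by
  rintro rfl
  rcases h with ⟨-, h⟩ | ⟨-, h⟩
  · exact h rfl
  · simp at h

theorem isStrictTotalOrder_angularLT {V : Type} {p : V → Pt} (hgen : GenPos p) {a : V}
    (hmin : ∀ v, v ≠ a → toLex (p a) < toLex (p v)) : IsStrictTotalOrder V (AngularLT p a) where
  trichotomous u v huv hvu := by
    by_contra hne
    rcases eq_or_ne u a with rfl | hu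
    · exact huv (Or.inl ⟨rfl, Ne.symm hne⟩)
    rcases eq_or_ne v a with rfl | hv
    · exact hvu (Or.inl ⟨rfl, hu⟩)
    rcases (hgen.det2_ne_zero (Ne.symm hu) (Ne.symm hv) hne).lt_or_gt with h | h
    · exact hvu (Or.inr ⟨hv, by rw [det2_swap_right]; linarith⟩)
    · exact huv (Or.inr ⟨hu, h⟩)
  irrefl u h := by
    rcases h with ⟨h, h'⟩ | ⟨-, h⟩
    · exact h' h
    · simp at h
  trans u v w huv hvw := by
    have hw := hvw.right_ne
    rcases huv with ⟨rfl, -⟩ | ⟨hu, huv⟩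
    · exact Or.inl ⟨rfl, hw⟩
    · rcases hvw with ⟨rfl, -⟩ | ⟨hv, hvw⟩
      · simp at huv
      · exact Or.inr ⟨hu, det2_pos_trans_of_toLex_lt (hmin u hu) (hmin v hv) (hmin w hw) huv hvw⟩

theorem exists_perm_isCCWOrder {n : ℕ} {p : Fin n → Pt} (hgen : GenPos p)
    (hconv : ConvexPos p) : ∃ σ : Equiv.Perm (Fin n), IsCCWOrder (p ∘ σ) := by
  rcases isEmpty_or_nonempty (Fin n) with hn | hn
  · exact ⟨1, fun i => isEmptyElim i⟩
  obtain ⟨a, -, ha⟩ := univ.exists_min_image (fun v => toLex (p v)) univ_nonempty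
  have hmin : ∀ v, v ≠ a → toLex (p a) < toLex (p v) := fun v hv =>
    (ha v (mem_univ v)).lt_of_ne fun h => hv (hgen.1 (toLex.injective h)).symm
  have := isStrictTotalOrder_angularLT hgen hmin
  obtain ⟨σ, hσ⟩ := exists_perm_rel_of_lt (AngularLT p a)
  refine ⟨σ, fun i j k hij hjk => ?_⟩
  show 0 < det2 (p (σ i)) (p (σ j)) (p (σ k))
  have hvw := (hσ j k hjk).resolve_left fun h => (hσ i j hij).right_ne h.1
  rcases hσ i j hij with ⟨hi, -⟩ | ⟨-, huv⟩
  · exact hi ▸ hvw.2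
  · exact det2_pos_of_convexPos hgen hconv huv hvw.2

end ConvexOrder

section Drawings

variable {V W : Type} {p : V → Pt}

theorem edgeCross_mk_iff {u v x y : V} :
    EdgeCross p s(u, v) s(x, y) ↔ SegCross (p u) (p v) (p x) (p y) := by
  refine ⟨?_, fun h => ⟨u, v, x, y, rfl, rfl, h⟩⟩
  rintro ⟨u', v', x', y', h1, h2, h⟩
  rcases Sym2.eq_iff.1 h1 with ⟨rfl, rfl⟩ | ⟨rfl, rfl⟩ <;>
    rcases Sym2.eq_iff.1 h2 with ⟨rfl, rfl⟩ | ⟨rfl, rfl⟩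
  exacts [h, h.swap_right, h.swap_left, h.swap_left.swap_right]

theorem EdgeCross.symm {e f : Sym2 V} (h : EdgeCross p e f) : EdgeCross p f e := by
  obtain ⟨u, v, x, y, rfl, rfl, h⟩ := h
  exact ⟨x, y, u, v, rfl, rfl, h.symm⟩

theorem edgeCross_comp_iff (σ : W ≃ V) {e f : Sym2 W} :
    EdgeCross (p ∘ σ) e f ↔ EdgeCross p (e.map σ) (f.map σ) := by
  induction e using Sym2.ind
  induction f using Sym2.ind
  simp only [Sym2.map_mk, edgeCross_mk_iff, Function.comp_apply]

theorem isOuterEdge_mk_iff {u v : V} :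
    IsOuterEdge p s(u, v) ↔ (∀ w, w ≠ u → w ≠ v → 0 < det2 (p u) (p v) (p w)) ∨
      (∀ w, w ≠ u → w ≠ v → det2 (p u) (p v) (p w) < 0) := by
  refine ⟨?_, fun h => ⟨u, v, rfl, h⟩⟩
  rintro ⟨u', v', he, h⟩
  rcases Sym2.eq_iff.1 he with ⟨rfl, rfl⟩ | ⟨rfl, rfl⟩
  · exact h
  · simp only [det2_swap_left (p u) (p v), neg_pos, neg_lt_zero] at h
    exact h.symm.imp (fun h w hu hv => h w hv hu) (fun h w hu hv => h w hv hu)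

theorem isOuterEdge_comp_iff (σ : W ≃ V) {e : Sym2 W} :
    IsOuterEdge (p ∘ σ) e ↔ IsOuterEdge p (e.map σ) := by
  induction e using Sym2.ind with
  | _ u v =>
    simp only [Sym2.map_mk, isOuterEdge_mk_iff, Function.comp_apply, σ.surjective.forall,
      ne_eq, EmbeddingLike.apply_eq_iff_eq]

theorem CrossingFree.comap {k : ℕ} {G : SimpleGraph V} {φ : Sym2 V → Fin k}
    (hφ : CrossingFree G p φ) (σ : W ≃ V) :
    CrossingFree (G.comap σ) (p ∘ σ) (φ ∘ Sym2.map σ) := by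
  intro e he f hf hef hc hcross
  rw [← (SimpleGraph.Iso.comap σ G).map_mem_edgeSet_iff] at he hf
  exact hφ _ he _ hf ((Sym2.map.injective σ.injective).ne hef) hc
    ((edgeCross_comp_iff σ).1 hcross)

/-- No missing edge can be added in color `c`. -/
def ColorSaturated {k : ℕ} (G : SimpleGraph V) (p : V → Pt) (φ : Sym2 V → Fin k) (c : Fin k) :
    Prop :=
  ∀ u v, u ≠ v → ¬ G.Adj u v → ∃ f ∈ G.edgeSet, φ f = c ∧ EdgeCross p s(u, v) f

def innerEdgesOfColor {k : ℕ} (G : SimpleGraph V) (p : V → Pt) (φ : Sym2 V → Fin k)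
    (c : Fin k) : Set (Sym2 V) :=
  {e | e ∈ G.edgeSet ∧ φ e = c ∧ ¬ IsOuterEdge p e}

theorem PrecoloredSaturated.colorSaturated {k : ℕ} {G : SimpleGraph V}
    {φ : Sym2 V → Fin k} (hsat : PrecoloredSaturated G p φ) (hφ : CrossingFree G p φ)
    (c : Fin k) : ColorSaturated G p φ c := by
  intro u v huv hadj
  have huvG : s(u, v) ∉ G.edgeSet := hadj
  have hne : ∀ {g}, g ∈ G.edgeSet → g ≠ s(u, v) := fun hg h => huvG (h ▸ hg)
  have hmem : ∀ e ∈ (G ⊔ SimpleGraph.fromEdgeSet {s(u, v)}).edgeSet,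
      e ∈ G.edgeSet ∨ e = s(u, v) := by
    intro e he
    simp only [SimpleGraph.edgeSet_sup, SimpleGraph.edgeSet_fromEdgeSet, Set.mem_union,
      Set.mem_sdiff, Set.mem_singleton_iff] at he
    tauto
  have := hsat u v huv hadj c
  simp only [CrossingFree, not_forall, not_not] at this
  obtain ⟨e, he, f, hf, hef, hc, hcross⟩ := this
  rcases hmem e he with he | rfl <;> rcases hmem f hf with hf | rfl
  · rw [if_neg (hne he), if_neg (hne hf)] at hc
    exact absurd hcross (hφ e he f hf hef hc)
  · rw [if_neg (hne he), if_pos rfl] at hc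
    exact ⟨e, he, hc, hcross.symm⟩
  · rw [if_pos rfl, if_neg (hne hf)] at hc
    exact ⟨f, hf, hc.symm, hcross⟩
  · exact absurd rfl hef

theorem ColorSaturated.comap {k : ℕ} {G : SimpleGraph V} {φ : Sym2 V → Fin k} {c : Fin k}
    (h : ColorSaturated G p φ c) (σ : W ≃ V) :
    ColorSaturated (G.comap σ) (p ∘ σ) (φ ∘ Sym2.map σ) c := by
  intro u v huv hadj
  obtain ⟨f, hf, hfc, hcross⟩ := h (σ u) (σ v) (σ.injective.ne huv) hadj
  have hf' : (f.map σ.symm).map σ = f := by simp [Sym2.map_map]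
  refine ⟨f.map σ.symm, ?_, ?_, ?_⟩
  · rw [← (SimpleGraph.Iso.comap σ G).map_mem_edgeSet_iff]
    exact hf'.symm ▸ hf
  · simpa only [Function.comp_apply, hf'] using hfc
  · rw [edgeCross_comp_iff, hf', Sym2.map_mk]
    exact hcross

theorem ncard_innerEdgesOfColor_comap {k : ℕ} {G : SimpleGraph V} {φ : Sym2 V → Fin k}
    {c : Fin k} (σ : W ≃ V) :
    (innerEdgesOfColor (G.comap σ) (p ∘ σ) (φ ∘ Sym2.map σ) c).ncard =
      (innerEdgesOfColor G p φ c).ncard := by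
  have hpre : innerEdgesOfColor (G.comap σ) (p ∘ σ) (φ ∘ Sym2.map σ) c =
      Sym2.map σ ⁻¹' innerEdgesOfColor G p φ c := by
    ext e
    simp only [innerEdgesOfColor, Set.mem_preimage, Set.mem_ofPred_eq, isOuterEdge_comp_iff,
      Function.comp_apply, ← (SimpleGraph.Iso.comap σ G).map_mem_edgeSet_iff]
    rfl
  rw [hpre, Set.ncard_preimage_of_injective_subset_range (Sym2.map.injective σ.injective)]
  intro e _
  exact ⟨e.map σ.symm, by simp [Sym2.map_map]⟩

end Drawings

section Chords

open Finset

variable {n : ℕ}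

/- A chord of the polygon with vertices `0, …, n - 1` in cyclic order is a pair `(i, j)` with
`i < j`; the region `[a, b]` is the part of the polygon cut off by the chord `(a, b)`. -/

def ChordsCross (e f : Fin n × Fin n) : Prop :=
  (e.1 < f.1 ∧ f.1 < e.2 ∧ e.2 < f.2) ∨ (f.1 < e.1 ∧ e.1 < f.2 ∧ f.2 < e.2)

def Covers (e : Fin n × Fin n) (v : Fin n) : Prop :=
  e.1 < v ∧ v < e.2

def IsNoncrossing (S : Finset (Fin n × Fin n)) : Prop :=
  (∀ e ∈ S, e.1 < e.2) ∧ ∀ e ∈ S, ∀ f ∈ S, ¬ ChordsCross e f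

def chordsIn (S : Finset (Fin n × Fin n)) (a b : Fin n) : Finset (Fin n × Fin n) :=
  {e ∈ S | a ≤ e.1 ∧ e.2 ≤ b}

def innerChords (S : Finset (Fin n × Fin n)) (a b : Fin n) : Finset (Fin n × Fin n) :=
  (chordsIn S a b).erase (a, b)

noncomputable def exposed (T : Finset (Fin n × Fin n)) (u w : Fin n) : Finset (Fin n) :=
  {v ∈ Ioo u w | ∀ e ∈ T, ¬ Covers e v}

/-- The faces of a noncrossing family `S` are bounded by its chords and by any pair
`(a, b)` enclosing all of `S` (the outer face). -/
def IsRegion (S : Finset (Fin n × Fin n)) (a b : Fin n) : Prop :=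
  (a, b) ∈ S ∨ ∀ e ∈ S, a ≤ e.1 ∧ e.2 ≤ b

theorem IsNoncrossing.mono {S T : Finset (Fin n × Fin n)} (hS : IsNoncrossing S) (hTS : T ⊆ S) :
    IsNoncrossing T :=
  ⟨fun e he => hS.1 e (hTS he), fun e he f hf => hS.2 e (hTS he) f (hTS hf)⟩

variable {S T : Finset (Fin n × Fin n)}

/-- A longest chord of `T` inside `[u, w]` is `(u, w)` itself. -/
theorem IsNoncrossing.mem_of_forall_covers (hT : IsNoncrossing T) {u w : Fin n}
    (huw : u.val + 1 < w) (hu : ∀ e ∈ T, ¬ Covers e u) (hw : ∀ e ∈ T, ¬ Covers e w)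
    (hcov : ∀ v, u < v → v < w → ∃ e ∈ T, Covers e v) : (u, w) ∈ T := by
  have hin : ∀ e ∈ T, ∀ v, u < v → v < w → Covers e v → e ∈ chordsIn T u w := by
    intro e he v huv hvw hv
    have := hu e he
    have := hw e he
    simp only [chordsIn, mem_filter, Covers] at *
    exact ⟨he, by omega, by omega⟩
  obtain ⟨e₀, he₀, hv₀⟩ := hcov ⟨u + 1, by omega⟩ (Fin.lt_def.2 (by simp))
    (Fin.lt_def.2 (by simpa using huw))
  obtain ⟨e, he, hmax⟩ := (chordsIn T u w).exists_max_image (fun e => e.2.val - e.1.val)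
    ⟨e₀, hin e₀ he₀ _ (Fin.lt_def.2 (by simp)) (Fin.lt_def.2 (by simpa using huw)) hv₀⟩
  simp only [chordsIn, mem_filter] at he hmax
  by_contra hne
  obtain ⟨v, hv, huv, hvw⟩ : ∃ v, (v = e.1 ∨ v = e.2) ∧ u < v ∧ v < w := by
    have := hT.1 e he.1
    rcases lt_or_eq_of_le he.2.1 with h | h
    · exact ⟨e.1, Or.inl rfl, h, by omega⟩
    · refine ⟨e.2, Or.inr rfl, by omega, lt_of_le_of_ne he.2.2 fun h' => hne ?_⟩
      rw [h, ← h']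
      exact he.1
  obtain ⟨f, hf, hfv⟩ := hcov v huv hvw
  have hfin := hin f hf v huv hvw hfv
  simp only [chordsIn, mem_filter] at hfin
  have := hmax f hfin
  have := hT.1 e he.1
  have := hT.2 e he.1 f hf
  simp only [ChordsCross, Covers] at *
  omega

theorem card_chordsIn_add_card_chordsIn_le (hS : ∀ e ∈ S, e.1 < e.2) {u t w : Fin n}
    (hut : u ≤ t) (htw : t ≤ w) :
    #(chordsIn S u t) + #(chordsIn S t w) ≤ #(chordsIn S u w) := by
  rw [← card_union_of_disjoint]
  · refine card_le_card fun e he => ?_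
    simp only [chordsIn, mem_union, mem_filter] at he ⊢
    rcases he with ⟨he, h1, h2⟩ | ⟨he, h1, h2⟩
    · exact ⟨he, h1, h2.trans htw⟩
    · exact ⟨he, hut.trans h1, h2⟩
  · refine disjoint_left.2 fun e he he' => ?_
    simp only [chordsIn, mem_filter] at he he'
    have := hS e he.1
    omega

theorem card_exposed_add_card_exposed_lt {u t w : Fin n} (hut : u < t) (htw : t < w)
    (ht : ∀ e ∈ T, ¬ Covers e t) :
    #(exposed T u t) + #(exposed T t w) < #(exposed T u w) := by
  rw [← card_union_of_disjoint]
  · refine card_lt_card ⟨fun v hv => ?_, fun h => ?_⟩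
    · simp only [exposed, mem_union, mem_filter, mem_Ioo] at hv ⊢
      rcases hv with ⟨⟨h1, h2⟩, hv⟩ | ⟨⟨h1, h2⟩, hv⟩
      · exact ⟨⟨h1, h2.trans htw⟩, hv⟩
      · exact ⟨⟨hut.trans h1, h2⟩, hv⟩
    · have := h (mem_filter.2 ⟨mem_Ioo.2 ⟨hut, htw⟩, ht⟩)
      simp [exposed] at this
  · refine disjoint_left.2 fun v hv hv' => ?_
    simp only [exposed, mem_filter, mem_Ioo] at hv hv'
    exact lt_asymm hv.1.2 hv'.1.1

/-- The exposed points of `[u, w]` cut it into unit steps and chords of `T`. -/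
theorem IsNoncrossing.le_of_not_covers (hT : IsNoncrossing T)
    (hchord : ∀ e ∈ T, e.2.val ≤ 2 * #(innerChords T e.1 e.2) + e.1 + 3) {u w : Fin n}
    (hu : ∀ e ∈ T, ¬ Covers e u) (hw : ∀ e ∈ T, ¬ Covers e w) :
    w.val ≤ 2 * #(chordsIn T u w) + #(exposed T u w) + u + 1 := by
  obtain ⟨d, hd⟩ : ∃ d, w.val - u.val = d := ⟨_, rfl⟩
  induction d using Nat.strong_induction_on generalizing u w with
  | _ d ih =>
  rcases (exposed T u w).eq_empty_or_nonempty with hex | ⟨t, ht⟩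
  · by_cases hshort : w.val ≤ u.val + 1
    · omega
    have hmem := hT.mem_of_forall_covers (by omega) hu hw fun v huv hvw => by
      by_contra! h
      have : v ∈ exposed T u w := mem_filter.2 ⟨mem_Ioo.2 ⟨huv, hvw⟩, h⟩
      simp [hex] at this
    have := hchord _ hmem
    have : #(innerChords T u w) + 1 = #(chordsIn T u w) :=
      card_erase_add_one (mem_filter.2 ⟨hmem, le_rfl, le_rfl⟩)
    simp only at *
    omega
  · simp only [exposed, mem_filter, mem_Ioo] at ht
    have := card_exposed_add_card_exposed_lt ht.1.1 ht.1.2 ht.2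
    have := ih (t - u) (by omega) hu ht.2 rfl
    have := ih (w - t) (by omega) ht.2 hw rfl
    have := card_chordsIn_add_card_chordsIn_le hT.1 ht.1.1.le ht.1.2.le
    omega

theorem mem_innerChords {a b : Fin n} {e : Fin n × Fin n} :
    e ∈ innerChords S a b ↔ e ∈ S ∧ (a ≤ e.1 ∧ e.2 ≤ b) ∧ e ≠ (a, b) := by
  simp only [innerChords, chordsIn, mem_erase, mem_filter]
  tauto

theorem not_covers_left_of_mem_innerChords {a b : Fin n} {e : Fin n × Fin n}
    (he : e ∈ innerChords S a b) : ¬ Covers e a := by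
  have := (mem_innerChords.1 he).2.1
  unfold Covers
  omega

theorem not_covers_right_of_mem_innerChords {a b : Fin n} {e : Fin n × Fin n}
    (he : e ∈ innerChords S a b) : ¬ Covers e b := by
  have := (mem_innerChords.1 he).2.1
  unfold Covers
  omega

theorem IsNoncrossing.le_of_isRegion (hS : IsNoncrossing S)
    (hface : ∀ a b, IsRegion S a b → #(exposed (innerChords S a b) a b) ≤ 2) {a b : Fin n}
    (hab : IsRegion S a b) : b.val ≤ 2 * #(innerChords S a b) + a + 3 := by
  obtain ⟨d, hd⟩ : ∃ d, b.val - a.val = d := ⟨_, rfl⟩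
  induction d using Nat.strong_induction_on generalizing a b with
  | _ d ih =>
  have hsub : innerChords S a b ⊆ S := fun e he => (mem_innerChords.1 he).1
  have key := (hS.mono hsub).le_of_not_covers (fun e he => ?_)
    (fun _ => not_covers_left_of_mem_innerChords) (fun _ => not_covers_right_of_mem_innerChords)
  · have hall : chordsIn (innerChords S a b) a b = innerChords S a b :=
      filter_true_of_mem fun e he => (mem_innerChords.1 he).2.1
    have := hface a b hab
    rw [hall] at key
    omega
  · obtain ⟨heS, ⟨h1, h2⟩, hne⟩ := mem_innerChords.1 he
    have hne' : e.1 ≠ a ∨ e.2 ≠ b := by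
      by_contra! h
      exact hne (Prod.ext h.1 h.2)
    have hlt := hS.1 e heS
    have hsame : innerChords (innerChords S a b) e.1 e.2 = innerChords S e.1 e.2 := by
      ext f
      simp only [mem_innerChords]
      constructor
      · rintro ⟨⟨hf, -⟩, hfe⟩
        exact ⟨hf, hfe⟩
      · rintro ⟨hf, ⟨hf1, hf2⟩, hfe⟩
        refine ⟨⟨hf, ⟨h1.trans hf1, hf2.trans h2⟩, fun hfab => ?_⟩, ⟨hf1, hf2⟩, hfe⟩
        subst hfab
        dsimp only at hf1 hf2
        omega
    rw [hsame]
    exact ih _ (by omega) (Or.inl heS) rfl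

theorem IsNoncrossing.le_two_mul_card_add_four (hS : IsNoncrossing S)
    (hface : ∀ a b, IsRegion S a b → #(exposed (innerChords S a b) a b) ≤ 2) :
    n ≤ 2 * #S + 4 := by
  rcases Nat.eq_zero_or_pos n with rfl | hn
  · omega
  let a : Fin n := ⟨0, hn⟩
  let b : Fin n := ⟨n - 1, by omega⟩
  have hbound := hS.le_of_isRegion hface (a := a) (b := b)
    (Or.inr fun e _ => ⟨Fin.le_def.2 (Nat.zero_le _), Fin.le_def.2 (by simp only [b]; omega)⟩)
  have : #(innerChords S a b) ≤ #S := card_le_card fun e he => (mem_innerChords.1 he).1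
  have ha : a.val = 0 := rfl
  have hb : b.val = n - 1 := rfl
  omega

theorem IsNoncrossing.not_chordsCross_of_not_covers (hS : IsNoncrossing S) {a b x y : Fin n}
    (hab : IsRegion S a b) (hx : a ≤ x ∧ x ≤ b) (hy : a ≤ y ∧ y ≤ b)
    (hxc : ∀ e ∈ innerChords S a b, ¬ Covers e x) (hyc : ∀ e ∈ innerChords S a b, ¬ Covers e y)
    {e : Fin n × Fin n} (he : e ∈ S) : ¬ ChordsCross (x, y) e := by
  by_cases hwithin : a ≤ e.1 ∧ e.2 ≤ b
  · rcases eq_or_ne e (a, b) with rfl | hne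
    · simp only [ChordsCross]
      omega
    · have hin : e ∈ innerChords S a b := mem_innerChords.2 ⟨he, hwithin, hne⟩
      have := hxc e hin
      have := hyc e hin
      simp only [ChordsCross, Covers] at *
      omega
  · rcases hab with hab' | hall
    · have := hS.2 _ hab' e he
      have := hS.1 e he
      simp only [ChordsCross] at *
      omega
    · exact absurd (hall e he) hwithin

end Chords

namespace IsCCWOrder

variable {n : ℕ} {q : Fin n → Pt}

theorem det2_pos (hq : IsCCWOrder q) {i j m : Fin n} (hij : i < j) (hm : m < i ∨ j < m) :
    0 < det2 (q i) (q j) (q m) := by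
  rcases hm with hm | hm
  · rw [← det2_rotate]
    exact hq m i j hm hij
  · exact hq i j m hij hm

theorem det2_neg (hq : IsCCWOrder q) {i j m : Fin n} (him : i < m) (hmj : m < j) :
    det2 (q i) (q j) (q m) < 0 := by
  rw [det2_swap_right, neg_lt_zero]
  exact hq i m j him hmj

theorem det2_nonneg (hq : IsCCWOrder q) {i j m : Fin n} (hij : i < j) (hm : m ≤ i ∨ j ≤ m) :
    0 ≤ det2 (q i) (q j) (q m) := by
  rcases eq_or_ne m i with rfl | hmi
  · simp
  rcases eq_or_ne m j with rfl | hmj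
  · simp
  exact (hq.det2_pos hij (by omega)).le

theorem det2_nonpos (hq : IsCCWOrder q) {i j m : Fin n} (him : i ≤ m) (hmj : m ≤ j) :
    det2 (q i) (q j) (q m) ≤ 0 := by
  rcases eq_or_ne m i with rfl | hmi
  · simp
  rcases eq_or_ne m j with rfl | hmj
  · simp
  exact (hq.det2_neg (by omega) (by omega)).le

theorem segCross_of_chordsCross (hq : IsCCWOrder q) {i j k l : Fin n} (hij : i < j)
    (hkl : k < l) (h : ChordsCross (i, j) (k, l)) : SegCross (q i) (q j) (q k) (q l) := by
  simp only [ChordsCross] at h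
  rcases h with ⟨hik, hkj, hjl⟩ | ⟨hki, hil, hlj⟩
  · exact segCross_of_mul_neg
      (mul_neg_of_neg_of_pos (hq.det2_neg hik hkj) (hq.det2_pos hij (Or.inr hjl)))
      (mul_neg_of_pos_of_neg (hq.det2_pos hkl (Or.inl hik)) (hq.det2_neg hkj hjl))
  · exact segCross_of_mul_neg
      (mul_neg_of_pos_of_neg (hq.det2_pos hij (Or.inl hki)) (hq.det2_neg hil hlj))
      (mul_neg_of_neg_of_pos (hq.det2_neg hki hil) (hq.det2_pos hkl (Or.inr hlj)))

theorem chordsCross_of_segCross (hq : IsCCWOrder q) {i j k l : Fin n} (hij : i < j)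
    (hkl : k < l) (hne : (i, j) ≠ (k, l)) (h : SegCross (q i) (q j) (q k) (q l)) :
    ChordsCross (i, j) (k, l) := by
  by_contra hnc
  refine not_segCross_of_sameSide ?_ h
  have hne' : i ≠ k ∨ j ≠ l := by
    by_contra! h'
    exact hne (Prod.ext h'.1 h'.2)
  simp only [ChordsCross] at hnc
  have hcases : ((k < i ∨ j < k) ∨ (l < i ∨ j < l)) ∧ (k ≤ i ∨ j ≤ k) ∧ (l ≤ i ∨ j ≤ l) ∨
      ((i < k ∧ k < j) ∨ (i < l ∧ l < j)) ∧ (i ≤ k ∧ k ≤ j) ∧ (i ≤ l ∧ l ≤ j) := by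
    omega
  rcases hcases with ⟨hs, hk, hl⟩ | ⟨hs, hk, hl⟩
  · exact Or.inl ⟨hq.det2_nonneg hij hk, hq.det2_nonneg hij hl,
      hs.imp (hq.det2_pos hij) (hq.det2_pos hij)⟩
  · exact Or.inr ⟨hq.det2_nonpos hk.1 hk.2, hq.det2_nonpos hl.1 hl.2,
      hs.imp (fun h => hq.det2_neg h.1 h.2) (fun h => hq.det2_neg h.1 h.2)⟩

theorem not_isOuterEdge (hq : IsCCWOrder q) {i j m m' : Fin n} (him : i < m) (hmj : m < j)
    (hm' : m' < i ∨ j < m') : ¬ IsOuterEdge q s(i, j) := by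
  have hij := him.trans hmj
  rw [isOuterEdge_mk_iff]
  rintro (h | h)
  · exact (h m him.ne' hmj.ne).not_gt (hq.det2_neg him hmj)
  · exact (h m' (by omega) (by omega)).not_gt (hq.det2_pos hij hm')

end IsCCWOrder

section InnerChords

open Finset

variable {n k : ℕ} {q : Fin n → Pt} {G : SimpleGraph (Fin n)} {φ : Sym2 (Fin n) → Fin k}
  {c : Fin k}

variable (q G φ c) in
noncomputable def innerChordsOfColor : Finset (Fin n × Fin n) :=
  {e | e.1 < e.2 ∧ G.Adj e.1 e.2 ∧ φ s(e.1, e.2) = c ∧ ¬ IsOuterEdge q s(e.1, e.2)}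

theorem mem_innerChordsOfColor {e : Fin n × Fin n} : e ∈ innerChordsOfColor q G φ c ↔
    e.1 < e.2 ∧ G.Adj e.1 e.2 ∧ φ s(e.1, e.2) = c ∧ ¬ IsOuterEdge q s(e.1, e.2) := by
  simp [innerChordsOfColor]

theorem ncard_innerEdgesOfColor :
    (innerEdgesOfColor G q φ c).ncard = #(innerChordsOfColor q G φ c) := by
  have himage : innerEdgesOfColor G q φ c =
      (fun e => s(e.1, e.2)) '' (innerChordsOfColor q G φ c : Set (Fin n × Fin n)) := by
    ext e
    simp only [innerEdgesOfColor, Set.mem_ofPred_eq, Set.mem_image, mem_coe,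
      mem_innerChordsOfColor]
    constructor
    · rintro ⟨he, hc, hout⟩
      obtain ⟨i, j, hij, hadj, rfl⟩ := SimpleGraph.exists_lt_of_mem_edgeSet he
      exact ⟨(i, j), ⟨hij, hadj, hc, hout⟩, rfl⟩
    · rintro ⟨e, ⟨-, hadj, hc, hout⟩, rfl⟩
      exact ⟨hadj, hc, hout⟩
  rw [himage, Set.InjOn.ncard_image, Set.ncard_coe_finset]
  intro e he f hf hef
  exact (Sym2.mk_eq_mk_iff_of_lt (mem_innerChordsOfColor.1 he).1
    (mem_innerChordsOfColor.1 hf).1).1 hef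

theorem IsCCWOrder.isNoncrossing_innerChordsOfColor (hq : IsCCWOrder q)
    (hφ : CrossingFree G q φ) : IsNoncrossing (innerChordsOfColor q G φ c) := by
  refine ⟨fun e he => (mem_innerChordsOfColor.1 he).1, fun e he f hf hcross => ?_⟩
  obtain ⟨he1, he2, he3, -⟩ := mem_innerChordsOfColor.1 he
  obtain ⟨hf1, hf2, hf3, -⟩ := mem_innerChordsOfColor.1 hf
  have hef : e ≠ f := by
    rintro rfl
    simp only [ChordsCross] at hcross
    omega
  exact hφ _ he2 _ hf2 (fun h => hef ((Sym2.mk_eq_mk_iff_of_lt he1 hf1).1 h))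
    (he3.trans hf3.symm) (edgeCross_mk_iff.2 (hq.segCross_of_chordsCross he1 hf1 hcross))

theorem IsCCWOrder.adj_of_forall_not_chordsCross (hq : IsCCWOrder q)
    (hsat : ColorSaturated G q φ c) {u w : Fin n} (huw : u < w)
    (h : ∀ e ∈ innerChordsOfColor q G φ c, ¬ ChordsCross (u, w) e) :
    G.Adj u w := by
  by_contra hadj
  obtain ⟨f, hf, hfc, hcross⟩ := hsat u w huw.ne hadj
  obtain ⟨k, l, hkl, hadj', rfl⟩ := SimpleGraph.exists_lt_of_mem_edgeSet hf
  have hne : (u, w) ≠ (k, l) := by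
    intro h
    simp only [Prod.mk.injEq] at h
    exact hadj (h.1 ▸ h.2 ▸ hadj')
  have hc := hq.chordsCross_of_segCross huw hkl hne (edgeCross_mk_iff.1 hcross)
  refine h (k, l) (mem_innerChordsOfColor.2 ⟨hkl, hadj', hfc, ?_⟩) hc
  simp only [ChordsCross] at hc
  rcases hc with ⟨h1, h2, h3⟩ | ⟨h1, h2, h3⟩
  · exact hq.not_isOuterEdge h2 h3 (Or.inl h1)
  · exact hq.not_isOuterEdge h1 h2 (Or.inr h3)

end InnerChords

section Pentagram

open Finset

variable {n : ℕ} {q : Fin n → Pt} {G : SimpleGraph (Fin n)} {φ : Sym2 (Fin n) → Fin 3}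

theorem IsCCWOrder.pentagram_color (hq : IsCCWOrder q) (hφ : CrossingFree G q φ)
    {v₀ v₁ v₂ v₃ v₄ : Fin n} (h₀₁ : v₀ < v₁) (h₁₂ : v₁ < v₂) (h₂₃ : v₂ < v₃) (h₃₄ : v₃ < v₄)
    (h₀₂ : G.Adj v₀ v₂) (h₀₃ : G.Adj v₀ v₃) (h₁₃ : G.Adj v₁ v₃) (h₁₄ : G.Adj v₁ v₄)
    (h₂₄ : G.Adj v₂ v₄) (c : Fin 3) :
    φ s(v₀, v₂) = c ∨ φ s(v₀, v₃) = c ∨ φ s(v₁, v₃) = c ∨ φ s(v₁, v₄) = c ∨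
      φ s(v₂, v₄) = c := by
  have hdiff : ∀ {i j k l : Fin n}, i < k → k < j → j < l → G.Adj i j → G.Adj k l →
      φ s(i, j) ≠ φ s(k, l) := by
    intro i j k l hik hkj hjl hij hkl hc
    have hcross : ChordsCross (i, j) (k, l) := Or.inl ⟨hik, hkj, hjl⟩
    refine hφ _ hij _ hkl (fun h => ?_) hc
      (edgeCross_mk_iff.2 (hq.segCross_of_chordsCross (hik.trans hkj) (hkj.trans hjl) hcross))
    rw [Sym2.mk_eq_mk_iff_of_lt (hik.trans hkj) (hkj.trans hjl), Prod.mk.injEq] at h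
    exact hik.ne h.1
  have := hdiff h₀₁ h₁₂ h₂₃ h₀₂ h₁₃
  have := hdiff h₁₂ h₂₃ h₃₄ h₁₃ h₂₄
  have := hdiff (h₀₁.trans h₁₂) h₂₃ h₃₄ h₀₃ h₂₄
  have := hdiff h₀₁ (h₁₂.trans h₂₃) h₃₄ h₀₃ h₁₄
  have := hdiff h₀₁ h₁₂ (h₂₃.trans h₃₄) h₀₂ h₁₄
  -- the diagonals form an odd cycle of crossings, so two colors do not suffice
  omega

theorem IsCCWOrder.adj_and_color_ne_of_mem_exposed (hq : IsCCWOrder q) (hφ : CrossingFree G q φ)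
    {c : Fin 3} (hsat : ColorSaturated G q φ c) {a b : Fin n}
    (hab : IsRegion (innerChordsOfColor q G φ c) a b) {x y t : Fin n} (hax : a ≤ x)
    (hxy : x < y) (hyb : y ≤ b) (hout : a < x ∨ y < b)
    (hx : ∀ e ∈ innerChords (innerChordsOfColor q G φ c) a b, ¬ Covers e x)
    (hy : ∀ e ∈ innerChords (innerChordsOfColor q G φ c) a b, ¬ Covers e y)
    (ht : t ∈ exposed (innerChords (innerChordsOfColor q G φ c) a b) a b) (hxt : x < t)
    (hty : t < y) : G.Adj x y ∧ φ s(x, y) ≠ c := by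
  have hadj := hq.adj_of_forall_not_chordsCross hsat hxy fun e he =>
    (hq.isNoncrossing_innerChordsOfColor hφ).not_chordsCross_of_not_covers hab
      ⟨hax, hxy.le.trans hyb⟩ ⟨hax.trans hxy.le, hyb⟩ hx hy he
  refine ⟨hadj, fun hc => (mem_filter.1 ht).2 (x, y) ?_ ⟨hxt, hty⟩⟩
  refine mem_innerChords.2 ⟨mem_innerChordsOfColor.2 ⟨hxy, hadj, hc, ?_⟩, ⟨hax, hyb⟩, ?_⟩
  · rcases hout with h | h
    exacts [hq.not_isOuterEdge hxt hty (Or.inl h), hq.not_isOuterEdge hxt hty (Or.inr h)]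
  · rw [Ne, Prod.mk.injEq]
    omega

theorem IsCCWOrder.card_exposed_le_two (hq : IsCCWOrder q) (hφ : CrossingFree G q φ) {c : Fin 3}
    (hsat : ColorSaturated G q φ c) {a b : Fin n}
    (hab : IsRegion (innerChordsOfColor q G φ c) a b) :
    #(exposed (innerChords (innerChordsOfColor q G φ c) a b) a b) ≤ 2 := by
  set R := innerChords (innerChordsOfColor q G φ c) a b
  have hdiag := fun {x y t : Fin n} => hq.adj_and_color_ne_of_mem_exposed hφ hsat hab (x := x)
    (y := y) (t := t)
  by_contra! h3
  obtain ⟨t₁, ht₁, t₂, ht₂, t₃, ht₃, h₁₂, h₂₃⟩ := exists_lt_lt_of_two_lt_card h3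
  have hexp : ∀ {t}, t ∈ exposed R a b → (a < t ∧ t < b) ∧ ∀ e ∈ R, ¬ Covers e t := fun ht => by
    simpa only [exposed, mem_filter, mem_Ioo] using ht
  obtain ⟨⟨ha₁, -⟩, hc₁⟩ := hexp ht₁
  obtain ⟨-, hc₂⟩ := hexp ht₂
  obtain ⟨⟨-, h₃b⟩, hc₃⟩ := hexp ht₃
  have hca : ∀ e ∈ R, ¬ Covers e a := fun _ => not_covers_left_of_mem_innerChords
  have hcb : ∀ e ∈ R, ¬ Covers e b := fun _ => not_covers_right_of_mem_innerChords
  have d₀₂ := hdiag le_rfl (ha₁.trans h₁₂) (h₂₃.trans h₃b).le (Or.inr (h₂₃.trans h₃b))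
    hca hc₂ ht₁ ha₁ h₁₂
  have d₀₃ := hdiag le_rfl (ha₁.trans (h₁₂.trans h₂₃)) h₃b.le (Or.inr h₃b)
    hca hc₃ ht₁ ha₁ (h₁₂.trans h₂₃)
  have d₁₃ := hdiag ha₁.le (h₁₂.trans h₂₃) h₃b.le (Or.inl ha₁) hc₁ hc₃ ht₂ h₁₂ h₂₃
  have d₁₄ := hdiag ha₁.le ((h₁₂.trans h₂₃).trans h₃b) le_rfl (Or.inl ha₁) hc₁ hcb
    ht₂ h₁₂ (h₂₃.trans h₃b)
  have d₂₄ := hdiag (ha₁.trans h₁₂).le (h₂₃.trans h₃b) le_rfl (Or.inl (ha₁.trans h₁₂))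
    hc₂ hcb ht₃ h₂₃ h₃b
  rcases hq.pentagram_color hφ ha₁ h₁₂ h₂₃ h₃b d₀₂.1 d₀₃.1 d₁₃.1 d₁₄.1 d₂₄.1 c with
    h | h | h | h | h
  exacts [d₀₂.2 h, d₀₃.2 h, d₁₃.2 h, d₁₄.2 h, d₂₄.2 h]

end Pentagram

theorem IsCCWOrder.le_card_innerChordsOfColor {n : ℕ} {q : Fin n → Pt} (hq : IsCCWOrder q)
    {G : SimpleGraph (Fin n)} {φ : Sym2 (Fin n) → Fin 3} (hφ : CrossingFree G q φ) {c : Fin 3}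
    (hsat : ColorSaturated G q φ c) : n ≤ 2 * (innerChordsOfColor q G φ c).card + 4 :=
  (hq.isNoncrossing_innerChordsOfColor hφ).le_two_mul_card_add_four fun _ _ hab =>
    hq.card_exposed_le_two hφ hsat hab

theorem stmt10_general (n : ℕ)
    (G : SimpleGraph (Fin n)) (p : Fin n → Pt)
    (hgen : GenPos p) (hconv : ConvexPos p)
    (hsat : Saturated 3 G p)
    (φ : Sym2 (Fin n) → Fin 3) (hφ : CrossingFree G p φ) :
    ∀ c : Fin 3,
      2 * (({e : Sym2 (Fin n) | e ∈ G.edgeSet ∧ φ e = c ∧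
          ¬ IsOuterEdge p e}.ncard : ℤ)) ≥ (n : ℤ) - 4 := by
  intro c
  obtain ⟨σ, hσ⟩ := exists_perm_isCCWOrder hgen hconv
  have hprec : PrecoloredSaturated G p φ := fun u v huv hadj _ => hsat u v huv hadj _
  have hcount := IsCCWOrder.le_card_innerChordsOfColor (q := p ∘ σ) hσ (hφ.comap σ)
    ((hprec.colorSaturated hφ c).comap σ)
  rw [← ncard_innerEdgesOfColor, ncard_innerEdgesOfColor_comap] at hcount
  change 2 * ((innerEdgesOfColor G p φ c).ncard : ℤ) ≥ n - 4
  omega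

/-- In a saturated convex Θ^3-drawing on `n ≥ 4` vertices, for
every crossing-free 3-coloring `φ` each color class contains at least
`(n-4)/2` inner edges. -/
theorem stmt10 (n : ℕ) (hn : 4 ≤ n)
    (G : SimpleGraph (Fin n)) (p : Fin n → Pt)
    (hgen : GenPos p) (hconv : ConvexPos p)
    (hsat : Saturated 3 G p)
    (φ : Sym2 (Fin n) → Fin 3) (hφ : CrossingFree G p φ) :
    ∀ c : Fin 3,
      2 * (({e : Sym2 (Fin n) | e ∈ G.edgeSet ∧ φ e = c ∧
          ¬ IsOuterEdge p e}.ncard : ℤ)) ≥ (n : ℤ) - 4 :=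
  stmt10_general n G p hgen hconv hsat φ hφ
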